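/- Let X be a projective Kähler surface, 𝓛 an ample line bundle on X, and L a line bundle on X (the vortex line bundle). Then for all sufficiently large p, the very ample bundle 𝓛^p has, by Bertini's theorem, a smooth irreducible divisor S, and deg(L) − deg(𝓛^p) < 0, so that no nonzero holomorphic section of L vanishes identically on S; hence the obstructions O(1) and O(2) are avoided for the vortex moduli space of X with Kähler form pω (and hence for (X, ω), since (X, ω) and (X, pω) are biholomorphic). -/

import Mathlib

/-!
A section of `L` vanishing on the zero divisor `S` of `𝓛^p` forces `deg 𝓛^p = deg S ≤ deg L`,
while `deg 𝓛^p = p · deg 𝓛` grows without bound since `deg 𝓛 > 0`. So once `p` is large enough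
for `𝓛^p` to be very ample and of degree exceeding `deg L`, any smooth irreducible divisor
provided by Bertini's theorem carries no nonzero section of `L` vanishing on it.
-/

/-- Abstract model of line bundles and divisors on a projective Kähler
surface `X` with integral Kähler form `ω`, together with the standard facts
about degrees, very ampleness of high powers of an ample bundle, and
Bertini's theorem. -/
structure ProjSurfaceData : Type 1 where
  /-- Holomorphic line bundles on `X`. -/
  LineB : Type
  /-- Divisors (closed complex curves) in `X`. -/
  Divisor : Type
  /-- Degree of a line bundle (against the Kähler class). -/
  degL : LineB → ℤ
  /-- Degree of a divisor. -/
  degD : Divisor → ℤ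
  /-- The `p`-th tensor power of a line bundle. -/
  pow : LineB → ℕ → LineB
  /-- The line bundle is ample. -/
  IsAmple : LineB → Prop
  /-- The line bundle is very ample. -/
  IsVeryAmple : LineB → Prop
  /-- The divisor is smooth and irreducible. -/
  IsSmoothIrreducible : Divisor → Prop
  /-- The divisor is the zero divisor of some nonzero holomorphic section of
  the bundle (in particular it represents the Poincaré dual of its Chern
  class). -/
  IsZeroDivisorOf : LineB → Divisor → Prop
  /-- Some non-identically-zero holomorphic section of the bundle vanishes
  identically on the divisor. -/
  SectionVanishesOn : LineB → Divisor → Prop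
  /-- `deg(E^p) = p · deg(E)`. -/
  deg_pow : ∀ (E : LineB) (p : ℕ), degL (pow E p) = (p : ℤ) * degL E
  /-- If a bundle has a holomorphic section vanishing on a smooth irreducible
  divisor `D`, then `deg(E) − deg(D) ≥ 0`. -/
  deg_sub_nonneg_of_vanishes : ∀ (E : LineB) (D : Divisor),
    IsSmoothIrreducible D → SectionVanishesOn E D → 0 ≤ degL E - degD D
  /-- High powers of an ample bundle are very ample. -/
  veryAmple_pow : ∀ E : LineB, IsAmple E → ∃ p₀ : ℕ, ∀ p ≥ p₀, IsVeryAmple (pow E p)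
  /-- Bertini's theorem: a very ample bundle has a smooth irreducible
  divisor. -/
  bertini : ∀ E : LineB, IsVeryAmple E →
    ∃ D : Divisor, IsSmoothIrreducible D ∧ IsZeroDivisorOf E D
  /-- The degree of a zero divisor of a section of `E` is `deg(E)`. -/
  deg_zeroDivisor : ∀ (E : LineB) (D : Divisor), IsZeroDivisorOf E D → degD D = degL E
  /-- An ample line bundle on the projective surface has positive degree. -/
  deg_pos_of_ample : ∀ E : LineB, IsAmple E → 0 < degL E
  /-- The Chern class of the bundle is the Kähler class `[ω]` (so its
  divisors represent the Poincaré dual of the Kähler class of `(X, pω)` for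
  the corresponding power). -/
  RepresentsKahlerClass : LineB → Prop

open Filter

namespace ProjSurfaceData

variable (X : ProjSurfaceData)

theorem degL_le_of_sectionVanishesOn {E L : X.LineB} {S : X.Divisor}
    (hS : X.IsSmoothIrreducible S) (hZ : X.IsZeroDivisorOf E S)
    (hv : X.SectionVanishesOn L S) : X.degL E ≤ X.degL L := by
  have := X.deg_sub_nonneg_of_vanishes L S hS hv
  rw [X.deg_zeroDivisor E S hZ] at this
  linarith

theorem not_sectionVanishesOn_of_degL_lt {E L : X.LineB} {S : X.Divisor}
    (hS : X.IsSmoothIrreducible S) (hZ : X.IsZeroDivisorOf E S)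
    (hlt : X.degL L < X.degL E) : ¬ X.SectionVanishesOn L S :=
  fun hv => (X.degL_le_of_sectionVanishesOn hS hZ hv).not_gt hlt

theorem eventually_degL_lt_degL_pow {E : X.LineB} (hE : X.IsAmple E) (L : X.LineB) :
    ∀ᶠ p in atTop, X.degL L < X.degL (X.pow E p) := by
  have hpos := X.deg_pos_of_ample E hE
  filter_upwards [eventually_gt_atTop (X.degL L).toNat] with p hp
  calc X.degL L < p := by omega
    _ ≤ p * X.degL E := le_mul_of_one_le_right (by positivity) hpos
    _ = X.degL (X.pow E p) := (X.deg_pow E p).symm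

end ProjSurfaceData

theorem obstructions_avoided_for_projective_surface_general
    (D : ProjSurfaceData) (𝓛 L : D.LineB)
    (hample : D.IsAmple 𝓛) :
    ∃ p₀ : ℕ, ∀ p ≥ p₀,
      D.IsVeryAmple (D.pow 𝓛 p) ∧
      ∃ S : D.Divisor,
        D.IsSmoothIrreducible S ∧
        D.IsZeroDivisorOf (D.pow 𝓛 p) S ∧
        D.degL L - D.degL (D.pow 𝓛 p) < 0 ∧
        ¬ D.SectionVanishesOn L S := by
  have hveryAmple := eventually_atTop.2 (D.veryAmple_pow 𝓛 hample)
  refine eventually_atTop.1 <| (hveryAmple.and (D.eventually_degL_lt_degL_pow hample L)).mono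
    fun p ⟨hva, hlt⟩ => ?_
  obtain ⟨S, hS, hZ⟩ := D.bertini _ hva
  exact ⟨hva, S, hS, hZ, sub_neg.2 hlt, D.not_sectionVanishesOn_of_degL_lt hS hZ hlt⟩

/-- For `𝓛` ample (representing the Kähler class of `X`)
and `L` the vortex line bundle, for all sufficiently large `p`, `𝓛^p` is very
ample and has, by Bertini, a smooth irreducible divisor `S`, with
`deg(L) − deg(𝓛^p) < 0`, and hence no nonzero holomorphic section of `L`
vanishes identically on `S`: the obstruction `O(2)` is avoided (the complex
curve `S` represents the Poincaré dual of the Kähler class of `(X, pω)`) and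
the obstruction `O(1)` is avoided. -/
theorem obstructions_avoided_for_projective_surface
    (D : ProjSurfaceData) (𝓛 L : D.LineB)
    (hample : D.IsAmple 𝓛)
    (hrep : D.RepresentsKahlerClass 𝓛) :
    ∃ p₀ : ℕ, ∀ p ≥ p₀,
      D.IsVeryAmple (D.pow 𝓛 p) ∧
      ∃ S : D.Divisor,
        D.IsSmoothIrreducible S ∧
        D.IsZeroDivisorOf (D.pow 𝓛 p) S ∧
        D.degL L - D.degL (D.pow 𝓛 p) < 0 ∧
        ¬ D.SectionVanishesOn L S :=
  obstructions_avoided_for_projective_surface_general D 𝓛 L hample
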